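/- Let A and B be commuting bounded linear operators on a complex Hilbert space H, both with closed range, such that R(A) = R(A*) (A is both posinormal and coposinormal) and R(B) ⊆ R(B*) (B is posinormal). Then AB has closed range and R(AB) ⊆ R((AB)*). -/

import Mathlib

/-!
Let `P` be the orthogonal projection onto the closed subspace `K = R(A) = R(A*)`.
Then `N(A) = N(A*) = Kᗮ`, so `A = A P` and `A` maps `K` isomorphically onto itself.
Since `B` commutes with `A`, it leaves both `R(A)` and `N(A)` invariant, hence commutes with `P`,
and so does `B*`. Consequently `R(AB) = A(R(B) ∩ K)` is closed, and every `y = ABx` satisfies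
`y = P y = P B* u = B* P u = B* A* z` once `y = B* u` and `P u = A* z`.
-/

open ContinuousLinearMap Module.End Topology

namespace Module.End

variable {R M : Type*} [Semiring R] [AddCommMonoid M] [Module R M]

lemma range_mem_invtSubmodule_of_commute {f g : Module.End R M} (h : Commute f g) :
    LinearMap.range f ∈ g.invtSubmodule := by
  rintro _ ⟨x, rfl⟩
  exact ⟨g x, LinearMap.congr_fun h x⟩

lemma ker_mem_invtSubmodule_of_commute {f g : Module.End R M} (h : Commute f g) :
    LinearMap.ker f ∈ g.invtSubmodule := by
  intro x hx
  simp only [Submodule.mem_comap, LinearMap.mem_ker] at hx ⊢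
  rw [← Module.End.mul_apply, h.eq, Module.End.mul_apply, hx, map_zero]

end Module.End

namespace ContinuousLinearMap

variable {𝕜 E F : Type*} [RCLike 𝕜] [NormedAddCommGroup E] [InnerProductSpace 𝕜 E]
  [NormedAddCommGroup F] [NormedSpace 𝕜 F]

lemma comp_starProjection_of_orthogonal_le_ker {A : E →L[𝕜] F} (K : Submodule 𝕜 E)
    [K.HasOrthogonalProjection] (h : Kᗮ ≤ A.ker) : A ∘L K.starProjection = A := by
  ext x
  have hx := h (K.sub_starProjection_mem_orthogonal x)
  rw [LinearMap.mem_ker, coe_coe, map_sub, sub_eq_zero] at hx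
  exact hx.symm

lemma isClosedEmbedding_comp_subtypeL [CompleteSpace F] {A : E →L[𝕜] F} (K : Submodule 𝕜 E)
    [CompleteSpace K] (hK : A.ker = Kᗮ) (hA : IsClosed (Set.range A)) :
    IsClosedEmbedding (A ∘L K.subtypeL) := by
  have hinj : Function.Injective (A ∘L K.subtypeL) := by
    refine (injective_iff_map_eq_zero _).mpr fun x hx ↦ Subtype.ext ?_
    have hx' : (x : E) ∈ Kᗮ := hK ▸ hx
    exact Submodule.disjoint_def.mp K.orthogonal_disjoint _ x.2 hx'
  have hAP := comp_starProjection_of_orthogonal_le_ker K hK.ge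
  have hrange : Set.range (A ∘L K.subtypeL) = Set.range A := by
    refine subset_antisymm (Set.range_comp_subset_range K.subtypeL A) ?_
    rintro _ ⟨x, rfl⟩
    exact ⟨K.orthogonalProjectionOnto x, congr($hAP x)⟩
  obtain ⟨c, hc⟩ := (A ∘L K.subtypeL).antilipschitz_of_injective_of_isClosed_range hinj
    (hrange ▸ hA)
  exact hc.isClosedEmbedding (A ∘L K.subtypeL).uniformContinuous

lemma commute_starProjection_range_of_commute {A B : E →L[𝕜] E}
    [A.range.HasOrthogonalProjection] (hA : A.ker = A.rangeᗮ) (h : Commute A B) :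
    Commute A.range.starProjection B := by
  have h' := h.map toLinearMapRingHom
  rw [IsIdempotentElem.commute_iff (Submodule.isIdempotentElem_starProjection _),
    Submodule.range_starProjection, Submodule.ker_starProjection, ← hA]
  exact ⟨range_mem_invtSubmodule_of_commute h', ker_mem_invtSubmodule_of_commute h'⟩

variable [CompleteSpace E]

lemma ker_eq_orthogonal_range_of_range_eq_range_adjoint {A : E →L[𝕜] E}
    (h : A.range = (adjoint A).range) : A.ker = A.rangeᗮ := by
  rw [h, orthogonal_range, adjoint_adjoint]

lemma isClosed_range_comp_of_commute {A B : E →L[𝕜] E} (hAcl : IsClosed (Set.range A))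
    (hBcl : IsClosed (Set.range B)) (hA : A.ker = A.rangeᗮ) (h : Commute A B) :
    IsClosed (Set.range (A ∘L B)) := by
  set K := A.range
  have : CompleteSpace K := hAcl.completeSpace_coe
  have hPB := commute_starProjection_range_of_commute hA h
  have hAP := comp_starProjection_of_orthogonal_le_ker K hA.ge
  have hrange : Set.range (A ∘L B) = (A ∘L K.subtypeL) '' (K.subtype ⁻¹' Set.range B) := by
    refine subset_antisymm ?_ ?_
    · rintro _ ⟨x, rfl⟩
      refine ⟨K.orthogonalProjectionOnto (B x), ⟨K.starProjection x, ?_⟩, ?_⟩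
      · exact (congr($hPB x)).symm
      · exact congr($hAP (B x))
    · rintro _ ⟨x, ⟨y, hy⟩, rfl⟩
      exact ⟨y, congr(A $hy)⟩
  rw [hrange]
  exact (isClosedEmbedding_comp_subtypeL K hA hAcl).isClosedMap _
    (hBcl.preimage continuous_subtype_val)

lemma range_comp_le_range_adjoint_comp_of_commute {A B : E →L[𝕜] E}
    (hAcl : IsClosed (Set.range A)) (hA : A.range = (adjoint A).range)
    (hB : B.range ≤ (adjoint B).range) (h : Commute A B) :
    (A ∘L B).range ≤ (adjoint (A ∘L B)).range := by
  set K := A.range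
  have : CompleteSpace K := hAcl.completeSpace_coe
  have hPB' : Commute K.starProjection (adjoint B) := by
    have hPB := (commute_starProjection_range_of_commute
      (ker_eq_orthogonal_range_of_range_eq_range_adjoint hA) h).star_star
    rwa [star_eq_adjoint, star_eq_adjoint, (isSelfAdjoint_starProjection K).adjoint_eq] at hPB
  rintro _ ⟨x, rfl⟩
  obtain ⟨u, hu⟩ : A (B x) ∈ (adjoint B).range := hB ⟨A x, (congr($h x)).symm⟩
  obtain ⟨z, hz⟩ : K.starProjection u ∈ (adjoint A).range :=
    hA ▸ K.starProjection_apply_mem u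
  refine ⟨z, ?_⟩
  calc adjoint (A ∘L B) z = adjoint B (K.starProjection u) := by
        rw [adjoint_comp]; exact congr(adjoint B $hz)
    _ = K.starProjection (A (B x)) := by rw [← hu]; exact congr($hPB' u).symm
    _ = (A ∘L B) x := Submodule.starProjection_eq_self_iff.mpr ⟨B x, rfl⟩

end ContinuousLinearMap

/-- Theorem 4.6: If a closed-range bounded operator `A` on a complex Hilbert space `H`
that is both posinormal and coposinormal (`R(A) = R(A*)`) commutes with a closed-range
posinormal operator `B` (`R(B) ⊆ R(B*)`), then `AB` has closed range and is posinormal. -/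
theorem stmt15 {H : Type*} [NormedAddCommGroup H] [InnerProductSpace ℂ H] [CompleteSpace H]
    (A B : H →L[ℂ] H) (hcomm : A ∘L B = B ∘L A)
    (hAran : IsClosed (Set.range A)) (hBran : IsClosed (Set.range B))
    (hA : LinearMap.range (A : H →ₗ[ℂ] H) = LinearMap.range (ContinuousLinearMap.adjoint A : H →ₗ[ℂ] H))
    (hB : LinearMap.range (B : H →ₗ[ℂ] H) ≤ LinearMap.range (ContinuousLinearMap.adjoint B : H →ₗ[ℂ] H)) :
    IsClosed (Set.range (A ∘L B)) ∧
      LinearMap.range (A ∘L B : H →ₗ[ℂ] H) ≤ LinearMap.range (ContinuousLinearMap.adjoint (A ∘L B) : H →ₗ[ℂ] H) :=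
  ⟨isClosed_range_comp_of_commute hAran hBran
      (ker_eq_orthogonal_range_of_range_eq_range_adjoint hA) hcomm,
    range_comp_le_range_adjoint_comp_of_commute hAran hA hB hcomm⟩
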